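/- Let X and E be metric spaces, with X non-empty, and let D = {x₁,x₂,…} be a fixed enumeration of a countable dense subset of X. Then the relation < is ill-founded on Coa(D,E) if and only if X coarsely embeds into E. -/

import Mathlib

open Filter Set Topology
open scoped ENNReal

noncomputable section

/-! ### Metric notions of embeddability -/

/-- A coarse embedding between (pseudo)metric spaces. -/
def CoarseEmbeddingMap {X E : Type*} [PseudoMetricSpace X] [PseudoMetricSpace E]
    (f : X → E) : Prop :=
  ∃ κ ω : ℝ → ℝ,
    MonotoneOn κ (Set.Ici 0) ∧ MonotoneOn ω (Set.Ici 0) ∧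
    (∀ t : ℝ, 0 ≤ t → 0 ≤ κ t ∧ 0 ≤ ω t) ∧
    Filter.Tendsto κ Filter.atTop Filter.atTop ∧
    ∀ x y : X, κ (dist x y) ≤ dist (f x) (f y) ∧ dist (f x) (f y) ≤ ω (dist x y)

/-- A uniform embedding between (pseudo)metric spaces. -/
def UniformEmbeddingMapNL {X E : Type*} [PseudoMetricSpace X] [PseudoMetricSpace E]
    (f : X → E) : Prop :=
  ∃ κ ω : ℝ → ℝ,
    MonotoneOn κ (Set.Ici 0) ∧ MonotoneOn ω (Set.Ici 0) ∧
    (∀ t : ℝ, 0 ≤ t → 0 ≤ κ t ∧ 0 ≤ ω t) ∧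
    (∀ t : ℝ, 0 < t → 0 < κ t) ∧
    Filter.Tendsto ω (nhdsWithin 0 (Set.Ioi 0)) (nhds 0) ∧
    ∀ x y : X, κ (dist x y) ≤ dist (f x) (f y) ∧ dist (f x) (f y) ≤ ω (dist x y)

/-- A bi-Lipschitz embedding between (pseudo)metric spaces. -/
def BiLipschitzEmbeddingMap {X E : Type*} [PseudoMetricSpace X] [PseudoMetricSpace E]
    (f : X → E) : Prop :=
  ∃ c C : ℝ, 0 < c ∧ c ≤ C ∧
    ∀ x y : X, c * dist x y ≤ dist (f x) (f y) ∧ dist (f x) (f y) ≤ C * dist x y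

/-! ### The set `𝒵`, functional moduli and the classes `M_coarse`, `M_uniform`, `M_Lipschitz` -/

/-- The set `𝒵 = {…,1/3,1/2,1,2,3,…} ⊆ (0,∞)`. -/
def Zset : Set ℝ := {r | ∃ n : ℕ, 1 ≤ n ∧ (r = n ∨ r = 1 / n)}

/-- Membership in `𝒩`: a non-decreasing `[0,∞]`-valued modulus on `𝒵` (values outside of `𝒵`
are irrelevant dummy values). -/
def Nmod (κ : ℝ → ℝ≥0∞) : Prop := MonotoneOn κ Zset

/-- `t₋`: the largest element of `𝒵` below a real `t > 0`. -/
def tminus (t : ℝ) : ℝ := if 1 ≤ t then (⌊t⌋ : ℝ) else 1 / (⌈1 / t⌉ : ℝ)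

/-- `t₊`: the smallest element of `𝒵` above a real `t > 0`. -/
def tplus (t : ℝ) : ℝ := if 1 ≤ t then (⌈t⌉ : ℝ) else 1 / (⌊1 / t⌋ : ℝ)

/-- The pair `(κ, ω)` belongs to `M_coarse`. -/
def Mcoarse (κ ω : ℝ → ℝ≥0∞) : Prop :=
  (∀ r ∈ Zset, ω r < ⊤) ∧ Filter.Tendsto (fun n : ℕ => κ n) Filter.atTop (nhds ⊤)

/-- The pair `(κ, ω)` belongs to `M_uniform`. -/
def Muniform (κ ω : ℝ → ℝ≥0∞) : Prop :=
  (∀ r ∈ Zset, 0 < κ r) ∧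
    Filter.Tendsto (fun n : ℕ => ω (1 / (n + 1 : ℝ))) Filter.atTop (nhds 0)

/-- The pair `(κ, ω)` belongs to `M_Lipschitz`. -/
def MLipschitz (κ ω : ℝ → ℝ≥0∞) : Prop :=
  ∃ c C : ℝ, 0 < c ∧ c < C ∧
    ∀ r ∈ Zset, ENNReal.ofReal (c * r) ≤ κ r ∧ ω r ≤ ENNReal.ofReal (C * r)

/-! ### Ill-foundedness and ranks of binary relations restricted to subsets -/

/-- The relation `r` is ill-founded on the subset `S`. -/
def IllFoundedOn {A : Type*} (r : A → A → Prop) (S : Set A) : Prop :=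
  ∃ a : ℕ → A, (∀ n, a n ∈ S) ∧ ∀ n, r (a (n + 1)) (a n)

/-- The rank `rk(S, r)` of a relation `r`, well-founded on a subset `S`. -/
def relRankOn {A : Type*} (r : A → A → Prop) (S : Set A)
    (h : WellFounded fun a b : S => r a b) : Ordinal :=
  ⨆ a : S, Order.succ (h.apply a).rank

/-! ### The simple embeddability ranks -/

/-- A quadruple `(κ, ω, k, φ)` as in the definition of `Ω(D,E)`; the countable dense set `D` is
given by an enumeration `x : ℕ → X` and `φ : D → E` is represented by the map on indices. -/
structure Quad (E : Type*) where
  kappa : ℝ → ℝ≥0∞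
  omega : ℝ → ℝ≥0∞
  k : ℕ
  phi : ℕ → E

/-- The set `Ω(D,E)` where `D` is enumerated by `x : ℕ → X`. -/
def OmegaSet {X E : Type*} [MetricSpace X] [MetricSpace E] (x : ℕ → X) : Set (Quad E) :=
  {q | Nmod q.kappa ∧ Nmod q.omega ∧
    (∀ i j : ℕ, x i = x j → q.phi i = q.phi j) ∧
    ∀ i < q.k, ∀ j < q.k, x i ≠ x j →
      q.kappa (tminus (dist (x i) (x j))) ≤ edist (q.phi i) (q.phi j) ∧
      edist (q.phi i) (q.phi j) ≤ q.omega (tplus (dist (x i) (x j)))}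

/-- The set `Coa(D,E)`. -/
def CoaSet {X E : Type*} [MetricSpace X] [MetricSpace E] (x : ℕ → X) : Set (Quad E) :=
  {q ∈ OmegaSet x | Mcoarse q.kappa q.omega}

/-- The set `Uni(D,E)`. -/
def UniSet {X E : Type*} [MetricSpace X] [MetricSpace E] (x : ℕ → X) : Set (Quad E) :=
  {q ∈ OmegaSet x | Muniform q.kappa q.omega}

/-- The set `Lip(D,E)`. -/
def LipSet {X E : Type*} [MetricSpace X] [MetricSpace E] (x : ℕ → X) : Set (Quad E) :=
  {q ∈ OmegaSet x | MLipschitz q.kappa q.omega}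

/-- The relation `<` on `Ω(D,E)`. -/
def QuadRel {E : Type*} (p q : Quad E) : Prop :=
  p.kappa = q.kappa ∧ p.omega = q.omega ∧ p.k = q.k + 1 ∧ ∀ i < q.k, p.phi i = q.phi i

/-! ### Embeddability ranks based on Schauder bases -/

/-- The copy of `ℤ` inside `ℝ`. -/
def ZR : Set ℝ := Set.range ((↑) : ℤ → ℝ)

/-- The copy of `ℚ` inside `ℝ`. -/
def QR : Set ℝ := Set.range ((↑) : ℚ → ℝ)

/-- `R[A]`: the set of `R`-linear combinations of the vectors `e i`, `i ∈ A`. -/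
def RComb {X : Type*} [NormedAddCommGroup X] [Module ℝ X] (R : Set ℝ) (e : ℕ → X)
    (A : Finset ℕ) : Set X :=
  {x | ∃ c : ℕ → ℝ, (∀ i, c i ∈ R) ∧ x = ∑ i ∈ A, c i • e i}

/-- `R[e₁,e₂,…]`: the set of all finite `R`-linear combinations of the vectors `e i`. -/
def RCombAll {X : Type*} [NormedAddCommGroup X] [Module ℝ X] (R : Set ℝ) (e : ℕ → X) : Set X :=
  ⋃ A : Finset ℕ, RComb R e A

/-- `A ≺* B` for finite subsets of `ℕ`: `A` is obtained from `B` by adding one element larger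
than all elements of `B`. -/
def PrecStar (A B : Finset ℕ) : Prop := ∃ m : ℕ, (∀ b ∈ B, b < m) ∧ A = insert m B

/-- A quadruple `(κ, ω, A, φ)` as in the definition of `Θ(R,(eₙ),E)`; the finite subset `A` of
`{e₁,e₂,…}` is recorded by the finite set of indices, and `φ` (a map on `R[e₁,e₂,…]`) is
represented by a map on `X` (only its values on `R`-linear combinations are ever relevant). -/
structure QuadF (X E : Type*) where
  kappa : ℝ → ℝ≥0∞
  omega : ℝ → ℝ≥0∞
  A : Finset ℕ
  phi : X → E

/-- The set `Θ(R,(eₙ),E)`. -/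
def ThetaSet {X E : Type*} [NormedAddCommGroup X] [Module ℝ X] [MetricSpace E]
    (R : Set ℝ) (e : ℕ → X) : Set (QuadF X E) :=
  {q | Nmod q.kappa ∧ Nmod q.omega ∧
    ∀ x ∈ RComb R e q.A, ∀ y ∈ RComb R e q.A, x ≠ y →
      q.kappa (tminus (dist x y)) ≤ edist (q.phi x) (q.phi y) ∧
      edist (q.phi x) (q.phi y) ≤ q.omega (tplus (dist x y))}

/-- The set `Coa(R,(eₙ),E)`. -/
def CoaTheta {X E : Type*} [NormedAddCommGroup X] [Module ℝ X] [MetricSpace E]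
    (R : Set ℝ) (e : ℕ → X) : Set (QuadF X E) :=
  {q ∈ ThetaSet R e | Mcoarse q.kappa q.omega}

/-- The set `Uni(R,(eₙ),E)`. -/
def UniTheta {X E : Type*} [NormedAddCommGroup X] [Module ℝ X] [MetricSpace E]
    (R : Set ℝ) (e : ℕ → X) : Set (QuadF X E) :=
  {q ∈ ThetaSet R e | Muniform q.kappa q.omega}

/-- The set `Lip(R,(eₙ),E)`. -/
def LipTheta {X E : Type*} [NormedAddCommGroup X] [Module ℝ X] [MetricSpace E]
    (R : Set ℝ) (e : ℕ → X) : Set (QuadF X E) :=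
  {q ∈ ThetaSet R e | MLipschitz q.kappa q.omega}

/-- The relation `<` on `Θ(R,(eₙ),E)`. -/
def QuadFRel {X E : Type*} [NormedAddCommGroup X] [Module ℝ X]
    (R : Set ℝ) (e : ℕ → X) (p q : QuadF X E) : Prop :=
  p.kappa = q.kappa ∧ p.omega = q.omega ∧ PrecStar p.A q.A ∧
    ∀ x ∈ RComb R e q.A, p.phi x = q.phi x

/-! ### Schauder bases, basic sequences, subsymmetric bases -/

/-- `(eₙ)` is a Schauder basis of the subset `S`: every element of `S` has a unique
norm-convergent expansion. -/
def IsSchauderBasisOf {X : Type*} [NormedAddCommGroup X] [Module ℝ X] (e : ℕ → X)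
    (S : Set X) : Prop :=
  ∀ x ∈ S, ∃! a : ℕ → ℝ,
    Filter.Tendsto (fun N => ∑ i ∈ Finset.range N, a i • e i) Filter.atTop (nhds x)

/-- `(eₙ)` is a Schauder basis of the whole space `X`. -/
def IsSchauderBasis {X : Type*} [NormedAddCommGroup X] [Module ℝ X] (e : ℕ → X) : Prop :=
  IsSchauderBasisOf e Set.univ

/-- `(eₙ)` is a basic sequence: it is a Schauder basis of its closed linear span. -/
def IsBasicSequence {X : Type*} [NormedAddCommGroup X] [Module ℝ X] (e : ℕ → X) : Prop :=
  IsSchauderBasisOf e (closure (Submodule.span ℝ (Set.range e) : Set X))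

/-- `(eₙ)` is a subsymmetric basic sequence. -/
def IsSubsymmetric {X : Type*} [NormedAddCommGroup X] [Module ℝ X] (e : ℕ → X) : Prop :=
  IsBasicSequence e ∧ ∃ C : ℝ, 1 ≤ C ∧ ∀ n : ℕ → ℕ, StrictMono n →
    ∀ s : Finset ℕ, ∀ a : ℕ → ℝ,
      C⁻¹ * ‖∑ k ∈ s, a k • e k‖ ≤ ‖∑ k ∈ s, a k • e (n k)‖ ∧
      ‖∑ k ∈ s, a k • e (n k)‖ ≤ C * ‖∑ k ∈ s, a k • e k‖

/-! ### Schreier families -/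

/-- `n ≤ A`: either `A = ∅` or `n ≤ min A`. -/
def natLE (n : ℕ) (A : Finset ℕ) : Prop := ∀ a ∈ A, n ≤ a

/-- `A < B`: either one is empty or `max A < min B`. -/
def finLT (A B : Finset ℕ) : Prop := ∀ a ∈ A, ∀ b ∈ B, a < b

/-- The Schreier families `S_α`, relative to a fixed assignment `lseq` of fundamental sequences
to (countable) limit ordinals; here `lseq l n` denotes `λ_{n+1}` in 1-based notation. -/
def Schreier (lseq : Ordinal → ℕ → Ordinal) (α : Ordinal) : Set (Finset ℕ) :=
  Ordinal.limitRecOn α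
    ({A | ∃ n : ℕ, 1 ≤ n ∧ A = {n}} ∪ {∅})
    (fun _ S => {A | ∃ n : ℕ, 1 ≤ n ∧ ∃ f : ℕ → Finset ℕ,
      (∀ i < n, f i ∈ S) ∧ natLE n (f 0) ∧
      (∀ i j : ℕ, i < j → j < n → finLT (f i) (f j)) ∧
      A = (Finset.range n).biUnion f})
    (fun o _ ih => {A | ∃ n : ℕ, natLE (n + 1) A ∧ ∃ h : lseq o n < o, A ∈ ih (lseq o n) h})

/-- `lseq` is a legitimate assignment of fundamental sequences: to every countable limit
ordinal `l` it assigns a strictly increasing sequence of smaller ordinals with supremum `l`. -/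
def IsFundSeq (lseq : Ordinal → ℕ → Ordinal) : Prop :=
  ∀ l : Ordinal, (l ≠ 0 ∧ ∀ a < l, Order.succ a < l) → l < (Cardinal.aleph 1).ord →
    StrictMono (lseq l) ∧ (∀ n, lseq l n < l) ∧ (⨆ n, lseq l n) = l

/-! ### The space `c₀` and `Z[S_α]_{c₀}` -/

/-- The Banach space `c₀` of real sequences vanishing at infinity, with the sup norm. -/
abbrev c0 : Type := ZeroAtInftyContinuousMap ℕ ℝ

/-- The standard unit vector basis of `c₀`. -/
def stdBasis (n : ℕ) : c0 :=
  { toFun := fun m => if m = n then (1 : ℝ) else 0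
    continuous_toFun := continuous_of_discreteTopology
    zero_at_infty' := by
      refine Filter.Tendsto.mono_left ?_ Filter.cocompact_le_cofinite
      refine tendsto_nhds_of_eventually_eq ?_
      refine Filter.eventually_cofinite.mpr (Set.Finite.subset (Set.finite_singleton n) ?_)
      intro m hm
      by_contra h
      exact hm (if_neg h) }

/-- The metric space `Z[S_α]_{c₀}` (as a subset of `c₀`). -/
def ZSchreierSet (lseq : Ordinal → ℕ → Ordinal) (α : Ordinal) : Set c0 :=
  {x | ∃ A ∈ Schreier lseq α, ∃ t : ℕ → ℤ, x = ∑ i ∈ A, (t i : ℝ) • stdBasis i}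

/-! ### Eventual domination -/

/-- The family `F ⊆ ℕ^ℕ` is bounded with respect to eventual domination. -/
def EvDomBounded (F : Set (ℕ → ℕ)) : Prop :=
  ∃ g : ℕ → ℕ, ∀ f ∈ F, ∀ᶠ m in Filter.atTop, f m < g m

end

/-!
A descending `<`-chain in `Coa(D,E)` has constant moduli `(κ, ω)` and its maps `φ` extend one
another, so it amounts to a single map `φ : D → E` obeying the `(κ, ω)`-bounds on all pairs.
Sending each point of `X` to `φ` of a point of `D` within distance `1` gives a coarse embedding
with moduli `t ↦ κ((t - 2)₋)` and `t ↦ ω((t + 2)₊)`; conversely a coarse embedding restricted to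
`D` yields such a chain.
-/

lemma pos_of_mem_zset {r : ℝ} (h : r ∈ Zset) : 0 < r := by
  obtain ⟨n, hn, rfl | rfl⟩ := h
  all_goals have hn : (0 : ℝ) < n := by exact_mod_cast hn
  all_goals positivity

lemma natCast_mem_zset {n : ℕ} (hn : 1 ≤ n) : (n : ℝ) ∈ Zset := ⟨n, hn, Or.inl rfl⟩

lemma intCast_mem_zset {n : ℤ} (hn : 1 ≤ n) : (n : ℝ) ∈ Zset := by
  lift n to ℕ using by omega
  exact ⟨n, by omega, Or.inl (by simp)⟩

lemma one_div_intCast_mem_zset {n : ℤ} (hn : 1 ≤ n) : 1 / (n : ℝ) ∈ Zset := by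
  lift n to ℕ using by omega
  exact ⟨n, by omega, Or.inr (by simp)⟩

lemma one_le_floor_one_div {t : ℝ} (ht : 0 < t) (h : t ≤ 1) : 1 ≤ ⌊1 / t⌋ :=
  Int.le_floor.2 (by exact_mod_cast one_le_one_div ht h)

lemma one_le_ceil_one_div {t : ℝ} (ht : 0 < t) (h : t ≤ 1) : 1 ≤ ⌈1 / t⌉ :=
  (one_le_floor_one_div ht h).trans (Int.floor_le_ceil _)

lemma tminus_mem_zset {t : ℝ} (ht : 0 < t) : tminus t ∈ Zset := by
  unfold tminus
  split_ifs with h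
  · exact intCast_mem_zset (Int.le_floor.2 (by exact_mod_cast h))
  · exact one_div_intCast_mem_zset (one_le_ceil_one_div ht (not_le.1 h).le)

lemma tplus_mem_zset {t : ℝ} (ht : 0 < t) : tplus t ∈ Zset := by
  unfold tplus
  split_ifs with h
  · exact intCast_mem_zset (Int.one_le_ceil_iff.2 (by linarith))
  · exact one_div_intCast_mem_zset (one_le_floor_one_div ht (not_le.1 h).le)

lemma tminus_le_self {t : ℝ} (ht : 0 < t) : tminus t ≤ t := by
  unfold tminus
  split_ifs with h
  · exact Int.floor_le t
  · have hc : (0 : ℝ) < ⌈1 / t⌉ := by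
      exact_mod_cast one_le_ceil_one_div ht (not_le.1 h).le
    exact (one_div_le hc ht).2 (Int.le_ceil _)

lemma le_tplus_self {t : ℝ} (ht : 0 < t) : t ≤ tplus t := by
  unfold tplus
  split_ifs with h
  · exact Int.le_ceil t
  · have hf : (0 : ℝ) < ⌊1 / t⌋ := by exact_mod_cast one_le_floor_one_div ht (not_le.1 h).le
    exact (le_one_div ht hf).2 (Int.floor_le _)

lemma sub_one_le_tminus {t : ℝ} (ht : 1 ≤ t) : t - 1 ≤ tminus t := by
  rw [tminus, if_pos ht]
  exact (Int.sub_one_lt_floor t).le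

lemma tminus_mono {s t : ℝ} (hs : 0 < s) (hst : s ≤ t) : tminus s ≤ tminus t := by
  unfold tminus
  split_ifs with hs1 ht1 ht1
  · exact_mod_cast Int.floor_le_floor hst
  · exact absurd (hs1.trans hst) ht1
  · have hc : (1 : ℝ) ≤ ⌈1 / s⌉ := by
      exact_mod_cast one_le_ceil_one_div hs (not_le.1 hs1).le
    calc 1 / (⌈1 / s⌉ : ℝ) ≤ 1 := div_le_one_of_le₀ hc (zero_le_one.trans hc)
      _ ≤ ⌊t⌋ := by exact_mod_cast Int.le_floor.2 (by exact_mod_cast ht1)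
  · have hc : (1 : ℝ) ≤ ⌈1 / t⌉ := by
      exact_mod_cast one_le_ceil_one_div (hs.trans_le hst) (not_le.1 ht1).le
    exact one_div_le_one_div_of_le (by linarith)
      (by exact_mod_cast Int.ceil_le_ceil (one_div_le_one_div_of_le hs hst))

lemma tplus_mono {s t : ℝ} (hs : 0 < s) (hst : s ≤ t) : tplus s ≤ tplus t := by
  unfold tplus
  split_ifs with hs1 ht1 ht1
  · exact_mod_cast Int.ceil_le_ceil hst
  · exact absurd (hs1.trans hst) ht1
  · have hf : (1 : ℝ) ≤ ⌊1 / s⌋ := by exact_mod_cast one_le_floor_one_div hs (not_le.1 hs1).le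
    calc 1 / (⌊1 / s⌋ : ℝ) ≤ 1 := div_le_one_of_le₀ hf (zero_le_one.trans hf)
      _ ≤ ⌈t⌉ := by exact_mod_cast Int.one_le_ceil_iff.2 (by linarith)
  · have hf : (1 : ℝ) ≤ ⌊1 / t⌋ := by
      exact_mod_cast one_le_floor_one_div (hs.trans_le hst) (not_le.1 ht1).le
    exact one_div_le_one_div_of_le (by linarith)
      (by exact_mod_cast Int.floor_le_floor (one_div_le_one_div_of_le hs hst))

section Chain

variable {E : Type*} {a : ℕ → Quad E}

lemma quadRel_chain_moduli (h : ∀ n, QuadRel (a (n + 1)) (a n)) (m : ℕ) :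
    (a m).kappa = (a 0).kappa ∧ (a m).omega = (a 0).omega := by
  induction m with
  | zero => exact ⟨rfl, rfl⟩
  | succ m ih => exact ⟨(h m).1.trans ih.1, (h m).2.1.trans ih.2⟩

lemma quadRel_chain_k (h : ∀ n, QuadRel (a (n + 1)) (a n)) (m : ℕ) :
    (a m).k = (a 0).k + m := by
  induction m with
  | zero => rfl
  | succ m ih => rw [(h m).2.2.1, ih, add_assoc]

lemma quadRel_chain_phi (h : ∀ n, QuadRel (a (n + 1)) (a n)) {m m' i : ℕ} (hm : m ≤ m')
    (hi : i < (a m).k) : (a m').phi i = (a m).phi i := by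
  induction m', hm using Nat.le_induction with
  | base => rfl
  | succ m' hm ih =>
    have hi' : i < (a m').k := by rw [quadRel_chain_k h] at hi ⊢; omega
    rw [(h m').2.2.2 i hi', ih]

end Chain

theorem illFoundedOn_iff_exists_forall_mem {X E : Type*} [MetricSpace X] [MetricSpace E]
    (x : ℕ → X) (P : (ℝ → ℝ≥0∞) → (ℝ → ℝ≥0∞) → Prop) :
    IllFoundedOn QuadRel {q ∈ OmegaSet (E := E) x | P q.kappa q.omega} ↔
      ∃ κ ω φ, ∀ k, (⟨κ, ω, k, φ⟩ : Quad E) ∈ {q ∈ OmegaSet x | P q.kappa q.omega} := by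
  constructor
  · rintro ⟨a, ha, h⟩
    have hk : ∀ i j, i < (a (max i j + 1)).k ∧ j < (a (max i j + 1)).k := fun i j => by
      rw [quadRel_chain_k h]; omega
    have hphi : ∀ m i, i < (a m).k → (a m).phi i = (a (i + 1)).phi i := fun m i hi => by
      rcases le_total m (i + 1) with hm | hm
      · exact (quadRel_chain_phi h hm hi).symm
      · exact quadRel_chain_phi h hm (by rw [quadRel_chain_k h]; omega)
    refine ⟨(a 0).kappa, (a 0).omega, fun i => (a (i + 1)).phi i, fun k => ?_⟩
    refine ⟨⟨(ha 0).1.1, (ha 0).1.2.1, fun i j hij => ?_, fun i _ j _ hij => ?_⟩, (ha 0).2⟩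
    · rw [← hphi _ i (hk i j).1, ← hphi _ j (hk i j).2]
      exact (ha _).1.2.2.1 i j hij
    · have hb := (ha _).1.2.2.2 i (hk i j).1 j (hk i j).2 hij
      rwa [(quadRel_chain_moduli h _).1, (quadRel_chain_moduli h _).2, hphi _ i (hk i j).1,
        hphi _ j (hk i j).2] at hb
  · rintro ⟨κ, ω, φ, h⟩
    exact ⟨fun k => ⟨κ, ω, k, φ⟩, h, fun k => ⟨rfl, rfl, rfl, fun _ _ => rfl⟩⟩

/-- The shift by `2` absorbs moving both points by less than `1` into `D`; taking the minimum
with `t` keeps the value finite when `κ` reaches `∞`. -/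
noncomputable def lowerModulus (κ : ℝ → ℝ≥0∞) (t : ℝ) : ℝ :=
  if 3 ≤ t then (min (κ (tminus (t - 2))) (ENNReal.ofReal t)).toReal else 0

noncomputable def upperModulus (ω : ℝ → ℝ≥0∞) (t : ℝ) : ℝ := (ω (tplus (t + 2))).toReal

section Moduli

variable {κ ω : ℝ → ℝ≥0∞}

lemma lowerModulus_nonneg {t : ℝ} : 0 ≤ lowerModulus κ t := by
  unfold lowerModulus
  split_ifs
  exacts [ENNReal.toReal_nonneg, le_rfl]

lemma monotone_lowerModulus (hκ : Nmod κ) : Monotone (lowerModulus κ) := by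
  intro s t hst
  unfold lowerModulus
  split_ifs with hs ht ht
  · refine ENNReal.toReal_mono (min_lt_of_right_lt ENNReal.ofReal_lt_top).ne
      (min_le_min ?_ (ENNReal.ofReal_le_ofReal hst))
    exact hκ (tminus_mem_zset (by linarith)) (tminus_mem_zset (by linarith))
      (tminus_mono (by linarith) (by linarith))
  · exact absurd (hs.trans hst) ht
  · exact ENNReal.toReal_nonneg
  · exact le_rfl

lemma tendsto_lowerModulus (hκ : Nmod κ) (hlim : Tendsto (fun n : ℕ => κ n) atTop (𝓝 ⊤)) :
    Tendsto (lowerModulus κ) atTop atTop := by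
  refine tendsto_atTop_atTop.2 fun b => ?_
  obtain ⟨N, hN, hN1⟩ :=
    ((hlim.eventually (lt_mem_nhds ENNReal.ofReal_lt_top)).and (eventually_ge_atTop 1)).exists
  refine ⟨max (N + 3) (max b 3), fun t ht => ?_⟩
  simp only [max_le_iff] at ht
  rw [lowerModulus, if_pos ht.2.2, ← ENNReal.ofReal_le_iff_le_toReal
    (min_lt_of_right_lt ENNReal.ofReal_lt_top).ne]
  refine le_min (hN.le.trans ?_) (ENNReal.ofReal_le_ofReal ht.2.1)
  refine hκ (natCast_mem_zset hN1) (tminus_mem_zset (by linarith)) ?_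
  linarith [sub_one_le_tminus (show 1 ≤ t - 2 by linarith)]

lemma lowerModulus_le_toReal (hκ : Nmod κ) {t s : ℝ} (hts : t - 2 ≤ s) {e : ℝ≥0∞}
    (he : e ≠ ⊤) (hκe : 0 < s → κ (tminus s) ≤ e) : lowerModulus κ t ≤ e.toReal := by
  unfold lowerModulus
  split_ifs with ht
  · have hs : 0 < s := by linarith
    refine ENNReal.toReal_mono he ((min_le_left _ _).trans ((hκ ?_ (tminus_mem_zset hs)
      (tminus_mono (by linarith) hts)).trans (hκe hs)))
    exact tminus_mem_zset (by linarith)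
  · exact ENNReal.toReal_nonneg

lemma toReal_le_upperModulus (hω : Nmod ω) (hfin : ∀ r ∈ Zset, ω r < ⊤) {t s : ℝ} (hs : 0 < s)
    (hst : s ≤ t + 2) {e : ℝ≥0∞} (he : e ≤ ω (tplus s)) : e.toReal ≤ upperModulus ω t :=
  ENNReal.toReal_mono (hfin _ (tplus_mem_zset (by linarith))).ne
    (he.trans (hω (tplus_mem_zset hs) (tplus_mem_zset (by linarith)) (tplus_mono hs hst)))

lemma monotoneOn_upperModulus (hω : Nmod ω) (hfin : ∀ r ∈ Zset, ω r < ⊤) :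
    MonotoneOn (upperModulus ω) (Ici 0) := fun s hs _ _ hst =>
  toReal_le_upperModulus hω hfin (by simp only [mem_Ici] at hs; linarith) (by linarith) le_rfl

end Moduli

theorem exists_coarseEmbeddingMap_of_forall_mem_coaSet {X E : Type*} [MetricSpace X]
    [MetricSpace E] {x : ℕ → X} (hx : DenseRange x) {κ ω : ℝ → ℝ≥0∞} {φ : ℕ → E}
    (h : ∀ k, (⟨κ, ω, k, φ⟩ : Quad E) ∈ CoaSet x) : ∃ f : X → E, CoarseEmbeddingMap f := by
  obtain ⟨⟨hκ, hω, hφx, -⟩, hfin, hlim⟩ := h 0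
  have hbound : ∀ i j, x i ≠ x j → κ (tminus (dist (x i) (x j))) ≤ edist (φ i) (φ j) ∧
      edist (φ i) (φ j) ≤ ω (tplus (dist (x i) (x j))) := fun i j hij =>
    (h (max i j + 1)).1.2.2.2 i (show i < max i j + 1 by omega) j
      (show j < max i j + 1 by omega) hij
  choose n hn using fun p => hx.exists_dist_lt p one_pos
  refine ⟨fun p => φ (n p), lowerModulus κ, upperModulus ω,
    (monotone_lowerModulus hκ).monotoneOn _, monotoneOn_upperModulus hω hfin,
    fun _ _ => ⟨lowerModulus_nonneg, ENNReal.toReal_nonneg⟩, tendsto_lowerModulus hκ hlim,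
    fun p q => ?_⟩
  have hclose := dist_dist_dist_le p q (x (n p)) (x (n q))
  rw [Real.dist_eq, abs_le] at hclose
  obtain ⟨hlo, hhi⟩ := hclose
  rw [dist_edist (φ (n p))]
  constructor
  · exact lowerModulus_le_toReal hκ (by linarith [hn p, hn q]) (edist_ne_top _ _)
      fun hpos => (hbound _ _ (dist_pos.1 hpos)).1
  · by_cases hpq : x (n p) = x (n q)
    · have hφpq : φ (n p) = φ (n q) := hφx _ _ hpq
      simp only [hφpq, edist_self, ENNReal.toReal_zero]
      exact ENNReal.toReal_nonneg
    · exact toReal_le_upperModulus hω hfin (dist_pos.2 hpq) (by linarith [hn p, hn q])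
        (hbound _ _ hpq).2

theorem CoarseEmbeddingMap.exists_forall_mem_coaSet {X E : Type*} [MetricSpace X]
    [MetricSpace E] (x : ℕ → X) {f : X → E} (hf : CoarseEmbeddingMap f) :
    ∃ κ ω, ∀ k, (⟨κ, ω, k, f ∘ x⟩ : Quad E) ∈ CoaSet x := by
  obtain ⟨κ, ω, hκ, hω, -, hlim, hb⟩ := hf
  refine ⟨fun r => ENNReal.ofReal (κ r), fun r => ENNReal.ofReal (ω r), fun k => ⟨⟨?_, ?_,
    fun i j hij => congrArg f hij, fun i _ j _ hij => ?_⟩, fun _ _ => ENNReal.ofReal_lt_top,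
    ENNReal.tendsto_ofReal_atTop.comp (hlim.comp tendsto_natCast_atTop_atTop)⟩⟩
  · exact fun r hr s hs hrs => ENNReal.ofReal_le_ofReal
      (hκ (pos_of_mem_zset hr).le (pos_of_mem_zset hs).le hrs)
  · exact fun r hr s hs hrs => ENNReal.ofReal_le_ofReal
      (hω (pos_of_mem_zset hr).le (pos_of_mem_zset hs).le hrs)
  have hd : 0 < dist (x i) (x j) := dist_pos.2 hij
  simp only [Function.comp_apply, edist_dist]
  exact ⟨ENNReal.ofReal_le_ofReal
      ((hκ (pos_of_mem_zset (tminus_mem_zset hd)).le hd.le (tminus_le_self hd)).trans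
        (hb _ _).1),
    ENNReal.ofReal_le_ofReal
      ((hb _ _).2.trans (hω hd.le (pos_of_mem_zset (tplus_mem_zset hd)).le (le_tplus_self hd)))⟩

theorem stmt4 {X E : Type*} [MetricSpace X] [MetricSpace E]
    (x : ℕ → X) (hx : DenseRange x) :
    IllFoundedOn QuadRel (CoaSet (E := E) x) ↔ ∃ f : X → E, CoarseEmbeddingMap f := by
  refine (illFoundedOn_iff_exists_forall_mem x Mcoarse).trans ⟨?_, ?_⟩
  · rintro ⟨κ, ω, φ, h⟩
    exact exists_coarseEmbeddingMap_of_forall_mem_coaSet hx h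
  · rintro ⟨f, hf⟩
    obtain ⟨κ, ω, h⟩ := hf.exists_forall_mem_coaSet x
    exact ⟨κ, ω, f ∘ x, h⟩
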